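/- arXiv:2402.08695 — 3 statements merged into one kernel-verified Lean document; each statement's English description precedes it below -/
import Mathlib

section
/- For probability densities p and q, define V(p,q) = ∫ p(x)·log(p(x)/(p(x)+q(x))) dx + ∫ q(x)·log(q(x)/(p(x)+q(x))) dx. Then V(p,q) ≥ −2·log 2, with equality if and only if p = q almost everywhere. -/
open Real MeasureTheory

lemma aux_log_ge (t : ℝ) (ht : 0 < t) : 1 - 1/t ≤ Real.log t := by
  have h := Real.log_le_sub_one_of_pos (show (0:ℝ) < 1/t by positivity)
  rw [one_div, Real.log_inv] at h
  rw [one_div]; linarith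

lemma aux_log_gt (t : ℝ) (ht : 0 < t) (ht1 : t ≠ 1) : 1 - 1/t < Real.log t := by
  have h := Real.log_lt_sub_one_of_pos (show (0:ℝ) < 1/t by positivity)
    (by intro h; exact ht1 ((div_eq_one_iff_eq ht.ne').mp h).symm)
  rw [one_div, Real.log_inv] at h
  rw [one_div]; linarith

noncomputable def G (a b : ℝ) : ℝ := a * Real.log (a/(a+b)) + b * Real.log (b/(a+b)) + (a+b) * Real.log 2

lemma key (a b : ℝ) (ha : 0 ≤ a) (hb : 0 ≤ b) : 0 ≤ G a b ∧ (G a b = 0 ↔ a = b) := by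
  rcases ha.eq_or_lt with ha0 | ha0
  · rcases hb.eq_or_lt with hb0 | hb0
    · simp [G, ← ha0, ← hb0]
    · have h1 : G a b = b * Real.log 2 := by
        simp [G, ← ha0, div_self hb0.ne']
      constructor
      · rw [h1]; positivity
      · rw [h1]
        constructor
        · intro h; exfalso
          have : (0:ℝ) < b * Real.log 2 := by positivity
          linarith
        · intro h; exfalso; linarith
  · rcases hb.eq_or_lt with hb0 | hb0
    · have h1 : G a b = a * Real.log 2 := by
        simp [G, ← hb0, div_self ha0.ne']
      constructor
      · rw [h1]; positivity
      · rw [h1]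
        constructor
        · intro h; exfalso
          have : (0:ℝ) < a * Real.log 2 := by positivity
          linarith
        · intro h; exfalso; linarith
    · -- both positive
      set s := a + b with hs
      have hs0 : 0 < s := by positivity
      have hrw : G a b = a * Real.log (2*a/s) + b * Real.log (2*b/s) := by
        have l1 : Real.log (2*a/s) = Real.log 2 + Real.log (a/s) := by
          rw [mul_div_assoc, Real.log_mul two_ne_zero (by positivity)]
        have l2 : Real.log (2*b/s) = Real.log 2 + Real.log (b/s) := by
          rw [mul_div_assoc, Real.log_mul two_ne_zero (by positivity)]
        simp only [G, l1, l2]; ring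
      have hta : 0 < 2*a/s := by positivity
      have htb : 0 < 2*b/s := by positivity
      have bnda : a - s/2 ≤ a * Real.log (2*a/s) := by
        have h := aux_log_ge _ hta
        have : 1/(2*a/s) = s/(2*a) := by field_simp
        rw [this] at h
        calc a - s/2 = a * (1 - s/(2*a)) := by field_simp
          _ ≤ a * Real.log (2*a/s) := mul_le_mul_of_nonneg_left h ha0.le
      have bndb : b - s/2 ≤ b * Real.log (2*b/s) := by
        have h := aux_log_ge _ htb
        have : 1/(2*b/s) = s/(2*b) := by field_simp
        rw [this] at h
        calc b - s/2 = b * (1 - s/(2*b)) := by field_simp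
          _ ≤ b * Real.log (2*b/s) := mul_le_mul_of_nonneg_left h hb0.le
      have hnn : 0 ≤ G a b := by rw [hrw]; have : a - s/2 + (b - s/2) = 0 := by rw [hs]; ring
                                 linarith
      refine ⟨hnn, ?_, ?_⟩
      · intro h
        by_contra hne
        have hta1 : 2*a/s ≠ 1 := by
          intro he
          apply hne
          field_simp at he
          rw [hs] at he; linarith
        have bnda' : a - s/2 < a * Real.log (2*a/s) := by
          have h2 := aux_log_gt _ hta hta1
          have h3 : 1/(2*a/s) = s/(2*a) := by field_simp
          rw [h3] at h2
          calc a - s/2 = a * (1 - s/(2*a)) := by field_simp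
            _ < a * Real.log (2*a/s) := by exact (mul_lt_mul_iff_right₀ ha0).mpr h2
        have : 0 < G a b := by rw [hrw]; have : a - s/2 + (b - s/2) = 0 := by rw [hs]; ring
                               linarith
        linarith
      · intro h
        subst h
        have : (2*a/s) = 1 := by rw [hs]; field_simp; ring
        rw [hrw, this]
        simp

/-- For probability densities `p, q`, the GAN value
`V(p,q) = ∫ p log(p/(p+q)) + ∫ q log(q/(p+q))` satisfies `V(p,q) ≥ −2 log 2`,
with equality iff `p = q` a.e. -/
theorem value_ge_neg_two_log_two (p q : ℝ → ℝ)
    (hp0 : ∀ x, 0 ≤ p x) (hq0 : ∀ x, 0 ≤ q x)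
    (hpm : Measurable p) (hqm : Measurable q)
    (hpi : Integrable p) (hqi : Integrable q)
    (hp1 : ∫ x, p x = 1) (hq1 : ∫ x, q x = 1)
    (hip : Integrable fun x => p x * Real.log (p x / (p x + q x)))
    (hiq : Integrable fun x => q x * Real.log (q x / (p x + q x))) :
    -(2 * Real.log 2) ≤ (∫ x, p x * Real.log (p x / (p x + q x))) +
        (∫ x, q x * Real.log (q x / (p x + q x))) ∧
    ((∫ x, p x * Real.log (p x / (p x + q x))) +
        (∫ x, q x * Real.log (q x / (p x + q x))) = -(2 * Real.log 2) ↔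
      p =ᵐ[MeasureTheory.volume] q) := by
  have hgint : Integrable (fun x => G (p x) (q x)) := by
    have h := (hip.add hiq).add ((hpi.add hqi).mul_const (Real.log 2))
    exact h.congr (by filter_upwards with x; simp [G])
  have hgnn : ∀ x, 0 ≤ G (p x) (q x) := fun x => (key _ _ (hp0 x) (hq0 x)).1
  have hInt : ∫ x, G (p x) (q x) =
      ((∫ x, p x * Real.log (p x / (p x + q x))) +
        (∫ x, q x * Real.log (q x / (p x + q x)))) + 2 * Real.log 2 := by
    have h1 : (fun x => G (p x) (q x)) = fun x =>
        (p x * Real.log (p x / (p x + q x)) + q x * Real.log (q x / (p x + q x))) +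
          (p x + q x) * Real.log 2 := by
      funext x; simp [G]
    have hsum : Integrable (fun x => p x * Real.log (p x / (p x + q x)) +
        q x * Real.log (q x / (p x + q x))) := hip.add hiq
    have hpq : Integrable (fun x => (p x + q x) * Real.log 2) :=
      (hpi.add hqi).mul_const _
    rw [h1, integral_add hsum hpq, integral_add hip hiq, integral_mul_const,
      integral_add hpi hqi, hp1, hq1]
    ring
  have hnn : 0 ≤ ∫ x, G (p x) (q x) := integral_nonneg hgnn
  have hiff : (∫ x, G (p x) (q x)) = 0 ↔ (fun x => G (p x) (q x)) =ᵐ[volume] 0 :=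
    integral_eq_zero_iff_of_nonneg hgnn hgint
  constructor
  · linarith
  · constructor
    · intro h
      have h0 : (∫ x, G (p x) (q x)) = 0 := by rw [hInt, h]; ring
      filter_upwards [hiff.mp h0] with x hx
      exact (key _ _ (hp0 x) (hq0 x)).2.mp hx
    · intro h
      have h0 : (fun x => G (p x) (q x)) =ᵐ[volume] 0 := by
        filter_upwards [h] with x hx
        exact (key _ _ (hp0 x) (hq0 x)).2.mpr hx
      have := hiff.mpr h0
      linarith [hInt ▸ this]
end

section
/- Let p, q be probability densities and let D*(x) = q(x)/(p(x)+q(x)) (defined where p(x)+q(x) > 0). Then for every measurable function D : ℝ → (0,1), ∫ p(x)·log(1−D(x)) dx + ∫ q(x)·log(D(x)) dx ≤ ∫ p(x)·log(1−D*(x)) dx + ∫ q(x)·log(D*(x)) dx. -/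
open Real MeasureTheory

lemma aux_log_bound (a u s : ℝ) (ha : 0 ≤ a) (hs : 0 < s) (hu : 0 < u) :
    a * (Real.log u - Real.log (a / s)) ≤ u * s - a := by
  rcases eq_or_lt_of_le ha with h | h
  · simp [← h]
    positivity
  · have hus : 0 < u * s / a := by positivity
    have hlog := Real.log_le_sub_one_of_pos hus
    have heq : Real.log (u * s / a) = Real.log u - Real.log (a / s) := by
      rw [Real.log_div (by positivity) h.ne', Real.log_mul hu.ne' hs.ne',
        Real.log_div h.ne' hs.ne']
      ring
    rw [heq] at hlog
    have := mul_le_mul_of_nonneg_left hlog ha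
    calc a * (Real.log u - Real.log (a / s)) ≤ a * (u * s / a - 1) := this
      _ = u * s - a := by field_simp

lemma pointwise_bound (a b t : ℝ) (ha : 0 ≤ a) (hb : 0 ≤ b)
    (ht0 : 0 < t) (ht1 : t < 1) :
    a * Real.log (1 - t) + b * Real.log t ≤
      a * Real.log (1 - b / (a + b)) + b * Real.log (b / (a + b)) := by
  rcases eq_or_lt_of_le (by positivity : (0:ℝ) ≤ a + b) with hs | hs
  · have ha0 : a = 0 := by linarith
    have hb0 : b = 0 := by linarith
    simp [ha0, hb0]
  · have h1 : 1 - b / (a + b) = a / (a + b) := by field_simp; ring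
    rw [h1]
    have hu1 : 0 < 1 - t := by linarith
    have H1 := aux_log_bound a (1 - t) (a + b) ha hs hu1
    have H2 := aux_log_bound b t (a + b) hb hs ht0
    nlinarith [H1, H2]

/-- The discriminator `D*(x) = q(x)/(p(x)+q(x))` is optimal: any measurable
`D : ℝ → (0,1)` achieves at most the value of `D*`. -/
theorem optimal_discriminator (p q : ℝ → ℝ)
    (hp0 : ∀ x, 0 ≤ p x) (hq0 : ∀ x, 0 ≤ q x)
    (hpm : Measurable p) (hqm : Measurable q)
    (hpi : Integrable p) (hqi : Integrable q)
    (hp1 : ∫ x, p x = 1) (hq1 : ∫ x, q x = 1)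
    (hip : Integrable fun x => p x * Real.log (1 - q x / (p x + q x)))
    (hiq : Integrable fun x => q x * Real.log (q x / (p x + q x)))
    (D : ℝ → ℝ) (hDm : Measurable D) (hD : ∀ x, D x ∈ Set.Ioo (0:ℝ) 1)
    (hiD1 : Integrable fun x => p x * Real.log (1 - D x))
    (hiD2 : Integrable fun x => q x * Real.log (D x)) :
    (∫ x, p x * Real.log (1 - D x)) + (∫ x, q x * Real.log (D x)) ≤
      (∫ x, p x * Real.log (1 - q x / (p x + q x))) +
        (∫ x, q x * Real.log (q x / (p x + q x))) := by
  rw [← integral_add hiD1 hiD2, ← integral_add hip hiq]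
  exact integral_mono (hiD1.add hiD2) (hip.add hiq) fun x =>
    pointwise_bound (p x) (q x) (D x) (hp0 x) (hq0 x) (hD x).1 (hD x).2
end

section
/- Let p, q be probability mass functions on a finite type with p ≠ q. Then min over measurable discriminators of the negative value is strict: Σ_x p(x)·log(p(x)/(p(x)+q(x))) + Σ_x q(x)·log(q(x)/(p(x)+q(x))) > −2·log 2. -/
open Real Finset

private lemma mul_log_div_eq (a s : ℝ) (ha : 0 ≤ a) (hs : 0 < s) :
    a * Real.log (a / s) = a * Real.log a - a * Real.log s := by
  rcases eq_or_lt_of_le ha with h | h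
  · simp [← h]
  · rw [Real.log_div h.ne' hs.ne']; ring

private lemma pointwise_lt (a b : ℝ) (ha : 0 ≤ a) (hb : 0 ≤ b) (hab : a ≠ b) :
    -((a + b) * Real.log 2) < a * Real.log (a / (a + b)) + b * Real.log (b / (a + b)) := by
  have hs : 0 < a + b := by
    rcases lt_or_eq_of_le ha with h | h
    · linarith
    · rcases lt_or_eq_of_le hb with h2 | h2
      · linarith
      · exact absurd (h.symm.trans h2) hab
  have hsc := Real.strictConvexOn_mul_log.2 (Set.mem_Ici.2 ha) (Set.mem_Ici.2 hb) hab
      (by norm_num : (0:ℝ) < 1/2) (by norm_num : (0:ℝ) < 1/2) (by norm_num)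
  simp only [smul_eq_mul] at hsc
  have hmid : (1/2 : ℝ) * a + (1/2) * b = (a + b) / 2 := by ring
  rw [hmid] at hsc
  have hlog : Real.log ((a + b) / 2) = Real.log (a + b) - Real.log 2 :=
    Real.log_div hs.ne' two_ne_zero
  rw [hlog] at hsc
  rw [mul_log_div_eq a (a + b) ha hs, mul_log_div_eq b (a + b) hb hs]
  nlinarith [hsc]

private lemma pointwise_le (a b : ℝ) (ha : 0 ≤ a) (hb : 0 ≤ b) :
    -((a + b) * Real.log 2) ≤ a * Real.log (a / (a + b)) + b * Real.log (b / (a + b)) := by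
  by_cases hab : a = b
  · subst hab
    rcases eq_or_lt_of_le ha with h | h
    · simp [← h]
    · have h2 : a / (a + a) = 1 / 2 := by field_simp; ring
      rw [h2, Real.log_div one_ne_zero two_ne_zero, Real.log_one]
      ring_nf
      exact le_refl _
  · exact (pointwise_lt a b ha hb hab).le

/-- For probability mass functions `p ≠ q` on a finite type, the optimal GAN
value is strictly above `−2·log 2`. -/
theorem discrete_value_strict {α : Type*} [Fintype α] (p q : α → ℝ)
    (hp0 : ∀ x, 0 ≤ p x) (hq0 : ∀ x, 0 ≤ q x)
    (hp1 : ∑ x, p x = 1) (hq1 : ∑ x, q x = 1) (hne : p ≠ q) :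
    -(2 * Real.log 2) <
      (∑ x, p x * Real.log (p x / (p x + q x))) +
        (∑ x, q x * Real.log (q x / (p x + q x))) := by
  obtain ⟨x₀, hx₀⟩ : ∃ x, p x ≠ q x := by
    by_contra h
    push_neg at h
    exact hne (funext h)
  have hsum : ∑ x, -((p x + q x) * Real.log 2) = -(2 * Real.log 2) := by
    rw [Finset.sum_neg_distrib, ← Finset.sum_mul, Finset.sum_add_distrib, hp1, hq1]
    ring
  rw [← Finset.sum_add_distrib, ← hsum]
  exact Finset.sum_lt_sum (fun i _ => pointwise_le (p i) (q i) (hp0 i) (hq0 i))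
    ⟨x₀, Finset.mem_univ x₀, pointwise_lt (p x₀) (q x₀) (hp0 x₀) (hq0 x₀) hx₀⟩
end
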